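/- Every countably generated free filter on ℕ is diagonal: for every sequence (A_n) of members of F and every F-stationary set I, there exists an F-stationary set J ⊆ I such that J \ A_n is finite for every n. -/

import Mathlib

/-- A filter on ℕ, as a family of subsets: nonempty (contains `univ`), not containing `∅`,
closed under finite intersections and supersets. -/
def IsSetFilter (F : Set (Set ℕ)) : Prop :=
  Set.univ ∈ F ∧ ∅ ∉ F ∧ (∀ A ∈ F, ∀ B ∈ F, A ∩ B ∈ F) ∧ ∀ A ∈ F, ∀ B : Set ℕ, A ⊆ B → B ∈ F

/-- A filter is free if its dual ideal contains all finite sets, i.e. the complement of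
every finite set belongs to the filter. -/
def IsFreeSetFilter (F : Set (Set ℕ)) : Prop :=
  IsSetFilter F ∧ ∀ S : Set ℕ, S.Finite → Sᶜ ∈ F

/-- `H` is `F`-stationary iff it does not belong to the dual ideal of `F`,
i.e. `Hᶜ ∉ F`. -/
def FStationary (F : Set (Set ℕ)) (H : Set ℕ) : Prop := Hᶜ ∉ F

/-- The dual ideal of `F` is countably generated by the partition `A` of ℕ into
pairwise disjoint nonempty sets: it consists exactly of the finite unions of subsets
of the sets `A k`. -/
def CountablyGeneratedBy (F : Set (Set ℕ)) (A : ℕ → Set ℕ) : Prop :=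
  (∀ k, (A k).Nonempty) ∧ Pairwise (Function.onFun Disjoint A) ∧ (⋃ k, A k) = Set.univ ∧
    ∀ S : Set ℕ, Sᶜ ∈ F ↔ ∃ T : Finset ℕ, ∃ B : ℕ → Set ℕ,
      (∀ k ∈ T, B k ⊆ A k) ∧ S = ⋃ k ∈ T, B k

/-- `F` is super-diagonal: every stationary set has a stationary subset all of whose
infinite subsets are stationary. -/
def SuperDiagonal (F : Set (Set ℕ)) : Prop :=
  ∀ I : Set ℕ, FStationary F I →
    ∃ J ⊆ I, FStationary F J ∧ ∀ K ⊆ J, K.Infinite → FStationary F K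

/-- `F` is diagonal: for every sequence `(A n)` of members of `F` and every stationary
set `I` there exists a stationary `J ⊆ I` with `J \ A n` finite for all `n`. -/
def DiagonalFilter (F : Set (Set ℕ)) : Prop :=
  ∀ A : ℕ → Set ℕ, (∀ n, A n ∈ F) → ∀ I : Set ℕ, FStationary F I →
    ∃ J ⊆ I, FStationary F J ∧ ∀ n, (J \ A n).Finite

/-- `F` is block-respecting: for every stationary set `H` and every partition `(D k)`
of `H` into finite sets, there is a stationary `J ⊆ H` with `|J ∩ D k| ≤ 1` for all `k`. -/
def BlockRespecting (F : Set (Set ℕ)) : Prop :=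
  ∀ H : Set ℕ, FStationary F H → ∀ D : ℕ → Set ℕ, (∀ k, (D k).Finite) →
    Pairwise (Function.onFun Disjoint D) → (⋃ k, D k) = H →
    ∃ J ⊆ H, FStationary F J ∧ ∀ k, (J ∩ D k).Subsingleton

/-!
A set meets the dual ideal of `F` iff it meets only finitely many blocks `A k` of the generating
partition, so the `F`-stationary sets are exactly those meeting infinitely many blocks. Given a
stationary `I`, pick one point of `I` in every block that `I` meets. The resulting transversal `J`
meets the same infinitely many blocks, hence is stationary, and for `B ∈ F` the set `J \ B` lies in
the finitely many blocks met by `Bᶜ`, with at most one point in each, hence is finite.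
-/

section Blocks

variable {ι α : Type*}

def blocksMeeting (A : ι → Set α) (S : Set α) : Set ι := {i | (S ∩ A i).Nonempty}

variable {A : ι → Set α}

lemma eq_of_mem_of_pairwise_disjoint (hdisj : Pairwise (Function.onFun Disjoint A)) {x : α}
    {i j : ι} (hi : x ∈ A i) (hj : x ∈ A j) : i = j :=
  by_contra fun h => Set.disjoint_left.1 (hdisj h) hi hj

lemma blocksMeeting_mono {S T : Set α} (h : S ⊆ T) : blocksMeeting A S ⊆ blocksMeeting A T :=
  fun _ ⟨x, hxS, hxA⟩ => ⟨x, h hxS, hxA⟩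

lemma finite_of_finite_blocksMeeting {J : Set α} (hcov : J ⊆ ⋃ i, A i)
    (hsub : ∀ i, (J ∩ A i).Subsingleton) (hfin : (blocksMeeting A J).Finite) : J.Finite := by
  refine (hfin.biUnion fun i _ => (hsub i).finite).subset fun x hx => ?_
  obtain ⟨i, hi⟩ := Set.mem_iUnion.1 (hcov hx)
  exact Set.mem_biUnion ⟨x, hx, hi⟩ ⟨hx, hi⟩

lemma exists_transversal (hdisj : Pairwise (Function.onFun Disjoint A)) (I : Set α) :
    ∃ J ⊆ I, blocksMeeting A J = blocksMeeting A I ∧ ∀ i, (J ∩ A i).Subsingleton := by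
  choose f hf using fun i : blocksMeeting A I => (i.2 : (I ∩ A i).Nonempty)
  have hJI : Set.range f ⊆ I := Set.range_subset_iff.2 fun i => (hf i).1
  refine ⟨Set.range f, hJI, (blocksMeeting_mono hJI).antisymm
    fun i hi => ⟨f ⟨i, hi⟩, Set.mem_range_self _, (hf ⟨i, hi⟩).2⟩, ?_⟩
  rintro i _ ⟨⟨j, rfl⟩, hj⟩ _ ⟨⟨k, rfl⟩, hk⟩
  congr 1
  exact Subtype.ext ((eq_of_mem_of_pairwise_disjoint hdisj (hf j).2 hj).trans
    (eq_of_mem_of_pairwise_disjoint hdisj (hf k).2 hk).symm)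

end Blocks

namespace CountablyGeneratedBy

variable {F : Set (Set ℕ)} {A : ℕ → Set ℕ}

lemma compl_mem_iff (hgen : CountablyGeneratedBy F A) (S : Set ℕ) :
    Sᶜ ∈ F ↔ (blocksMeeting A S).Finite := by
  obtain ⟨-, hdisj, hcov, hideal⟩ := hgen
  rw [hideal]
  constructor
  · rintro ⟨T, B, hB, rfl⟩
    refine T.finite_toSet.subset ?_
    rintro i ⟨x, hx, hxi⟩
    obtain ⟨j, hj, hxj⟩ := Set.mem_iUnion₂.1 hx
    rwa [eq_of_mem_of_pairwise_disjoint hdisj hxi (hB j hj hxj)]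
  · intro hfin
    refine ⟨hfin.toFinset, fun i => S ∩ A i, fun _ _ => Set.inter_subset_right, ?_⟩
    ext x
    simp only [Set.mem_iUnion, Set.Finite.mem_toFinset, exists_prop]
    refine ⟨fun hx => ?_, fun ⟨_, _, hx, _⟩ => hx⟩
    obtain ⟨i, hi⟩ := Set.mem_iUnion.1 (hcov ▸ Set.mem_univ x)
    exact ⟨i, ⟨x, hx, hi⟩, hx, hi⟩

lemma fStationary_iff (hgen : CountablyGeneratedBy F A) (H : Set ℕ) :
    FStationary F H ↔ (blocksMeeting A H).Infinite :=
  (hgen.compl_mem_iff H).not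

end CountablyGeneratedBy

theorem stmt1_general (F : Set (Set ℕ)) (A : ℕ → Set ℕ)
    (hgen : CountablyGeneratedBy F A) :
    DiagonalFilter F := by
  intro B hB I hI
  obtain ⟨J, hJI, hJblocks, hJsub⟩ := exists_transversal hgen.2.1 I
  refine ⟨J, hJI, by rwa [hgen.fStationary_iff, hJblocks, ← hgen.fStationary_iff], fun n => ?_⟩
  have hBn : (blocksMeeting A (B n)ᶜ).Finite :=
    (hgen.compl_mem_iff _).1 (by rw [compl_compl]; exact hB n)
  refine finite_of_finite_blocksMeeting (by rw [hgen.2.2.1]; exact Set.subset_univ _)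
    (fun i => (hJsub i).anti (Set.inter_subset_inter_left _ Set.sdiff_subset))
    (hBn.subset (blocksMeeting_mono fun _ hx => hx.2))

/-- every countably generated free filter on ℕ is diagonal. -/
theorem stmt1 (F : Set (Set ℕ)) (A : ℕ → Set ℕ)
    (hF : IsFreeSetFilter F) (hgen : CountablyGeneratedBy F A) :
    DiagonalFilter F :=
  stmt1_general F A hgen
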